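/- arXiv:2007.03937 — 2 statements merged into one kernel-verified Lean document; each statement's English description precedes it below -/
import Mathlib

section
/- Let (ψ_m, Θ_m)_{m∈ℕ} be an ISIMIN, for each m ∈ ℕ let X^x_m be the nearest neighbor of x among X₁, …, X_m according to (ψ_m, Θ_m), and let l ∈ ℝ. Then the following are equivalent: (1) l is the Lebesgue value of η at x with respect to ℙ_X; (2) 𝔼[|η(X^x_m) − l|] → 0 as m → ∞. -/
/-!
The law of the nearest neighbour `X^x_m` has density `y ↦ Q_m (d(x, y))` with respect to `μ`,
where `Q_m r` lies between `m μ(d(x,·) > r)^(m-1)` and `m μ(d(x,·) ≥ r)^(m-1)` (ties are broken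
by the independent selector). With `Λ` the measure of density `|η - l|` with respect to `μ`,
`𝔼|η(X^x_m) - l| = ∫ Q_m (d(x,·)) dΛ`.

If `Λ(B̄_r) ≤ ε μ(B̄_r)` for `r ≤ δ`, a layer-cake argument over the balls (whose radial weight
`Q_m` is decreasing with `∫ Q_m dμ ≤ 1`) bounds the part of this integral on `B̄_δ` by `ε`, while
off `B̄_δ` we have `Q_m ≤ m (1 - μ(B̄_δ))^(m-1) → 0`. Conversely, if `Λ(B̄_r) ≥ ε μ(B̄_r)` along
radii `r → 0` and `μ{x} = 0`, the choice `m ≈ 1 / (4 μ(B̄_r))` gives `𝔼|η(X^x_m) - l| ≥ ε / 8`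
for arbitrarily large `m`; if `μ{x} > 0`, then `𝔼|η(X^x_m) - l| ≥ |η x - l| μ{x}` forces
`η x = l`, and `l` is the Lebesgue value because `Λ(B̄_r) → Λ{x} = 0`.
-/

open MeasureTheory Filter Topology Set Metric ProbabilityTheory
open scoped ENNReal

theorem volume_restrict_Ioi_setOf_ofReal_lt (a : ℝ≥0∞) :
    volume.restrict (Ioi 0) {t : ℝ | ENNReal.ofReal t < a} = a := by
  rw [Measure.restrict_apply (measurableSet_lt ENNReal.measurable_ofReal measurable_const)]
  rcases eq_or_ne a ∞ with rfl | ha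
  · simp [Real.volume_Ioi]
  · have : {t : ℝ | ENNReal.ofReal t < a} ∩ Ioi 0 = Ioo 0 a.toReal := by
      ext t
      simp only [mem_inter_iff, mem_ofPred_eq, mem_Ioi, mem_Ioo]
      constructor
      · rintro ⟨h, ht⟩
        exact ⟨ht, (ENNReal.ofReal_lt_iff_lt_toReal ht.le ha).1 h⟩
      · rintro ⟨ht, h⟩
        exact ⟨(ENNReal.ofReal_lt_iff_lt_toReal ht.le ha).2 h, ht⟩
    rw [this, Real.volume_Ioo, sub_zero, ENNReal.ofReal_toReal ha]

theorem lintegral_eq_lintegral_meas_ofReal_lt {α : Type*} [MeasurableSpace α] (μ : Measure α)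
    [SFinite μ] {g : α → ℝ≥0∞} (hg : Measurable g) :
    ∫⁻ a, g a ∂μ = ∫⁻ t in Ioi 0, μ {a | ENNReal.ofReal t < g a} := by
  have hS : MeasurableSet {p : α × ℝ | ENNReal.ofReal p.2 < g p.1} :=
    measurableSet_lt (ENNReal.measurable_ofReal.comp measurable_snd) (hg.comp measurable_fst)
  calc ∫⁻ a, g a ∂μ
        = μ.prod (volume.restrict (Ioi 0)) {p : α × ℝ | ENNReal.ofReal p.2 < g p.1} := by
        rw [Measure.prod_apply hS]
        exact lintegral_congr fun a => (volume_restrict_Ioi_setOf_ofReal_lt (g a)).symm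
    _ = ∫⁻ t in Ioi 0, μ {a | ENNReal.ofReal t < g a} := Measure.prod_apply_symm hS

theorem IsLowerSet.exists_monotone_eq_iUnion_Iic {L : Set ℝ} (hL : IsLowerSet L)
    (hne : L.Nonempty) : ∃ u : ℕ → ℝ, Monotone u ∧ L = ⋃ n, Iic (u n) := by
  by_cases hb : BddAbove L
  · by_cases hs : sSup L ∈ L
    · refine ⟨fun _ => sSup L, monotone_const, ?_⟩
      rw [iUnion_const]
      exact Subset.antisymm (fun y hy => le_csSup hb hy) fun y hy => hL hy hs
    · refine ⟨fun n => sSup L - 1 / (n + 1), fun a b hab => ?_, ?_⟩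
      · exact sub_le_sub_left (Nat.one_div_le_one_div hab) _
      ext y
      simp only [mem_iUnion, mem_Iic]
      constructor
      · intro hy
        have hlt : y < sSup L := (le_csSup hb hy).lt_of_ne fun h => hs (h ▸ hy)
        obtain ⟨n, hn⟩ := exists_nat_one_div_lt (sub_pos.2 hlt)
        exact ⟨n, by linarith⟩
      · rintro ⟨n, hn⟩
        have : (0 : ℝ) < 1 / (n + 1) := Nat.one_div_pos_of_nat
        obtain ⟨l, hl, hyl⟩ := exists_lt_of_lt_csSup hne (by linarith : y < sSup L)
        exact hL hyl.le hl
  · refine ⟨fun n => n, Nat.mono_cast, ?_⟩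
    ext y
    simp only [mem_iUnion, mem_Iic]
    obtain ⟨l, hl, hyl⟩ := not_bddAbove_iff.1 hb y
    exact iff_of_true (hL hyl.le hl) (exists_nat_ge y)

theorem measure_le_mul_of_isLowerSet {ν ρ : Measure ℝ} {c : ℝ≥0∞}
    (h : ∀ r, ν (Iic r) ≤ c * ρ (Iic r)) {L : Set ℝ} (hL : IsLowerSet L) :
    ν L ≤ c * ρ L := by
  rcases L.eq_empty_or_nonempty with rfl | hne
  · simp
  obtain ⟨u, hu, rfl⟩ := hL.exists_monotone_eq_iUnion_Iic hne
  have hmono : Monotone fun n => Iic (u n) := fun a b hab => Iic_subset_Iic.2 (hu hab)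
  rw [hmono.measure_iUnion, hmono.measure_iUnion, ENNReal.mul_iSup]
  exact iSup_mono fun n => h (u n)

theorem lintegral_le_mul_of_measure_Iic_le {ν ρ : Measure ℝ} [SFinite ν] [SFinite ρ]
    {c : ℝ≥0∞} (h : ∀ r, ν (Iic r) ≤ c * ρ (Iic r)) {g : ℝ → ℝ≥0∞} (hg : Antitone g) :
    ∫⁻ t, g t ∂ν ≤ c * ∫⁻ t, g t ∂ρ := by
  have hmeas : Measurable fun s : ℝ => ρ {t | ENNReal.ofReal s < g t} :=
    Antitone.measurable fun s s' hss' =>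
      measure_mono fun t ht => (ENNReal.ofReal_le_ofReal hss').trans_lt ht
  rw [lintegral_eq_lintegral_meas_ofReal_lt ν hg.measurable,
    lintegral_eq_lintegral_meas_ofReal_lt ρ hg.measurable, ← lintegral_const_mul c hmeas]
  exact lintegral_mono fun s =>
    measure_le_mul_of_isLowerSet h fun a b hba ha => ha.trans_le (hg hba)

theorem MeasureTheory.Measure.AbsolutelyContinuous.measure_div_ne_top {α : Type*}
    [MeasurableSpace α] {μ Λ : Measure α} [IsFiniteMeasure Λ] (h : Λ ≪ μ) (s : Set α) :
    Λ s / μ s ≠ ∞ := by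
  by_cases hs : μ s = 0
  · simp [h hs]
  · exact ENNReal.div_ne_top (measure_ne_top Λ s) hs

theorem tendsto_integral_iff_tendsto_lintegral_ofReal {Ω ι : Type*} {mΩ : MeasurableSpace Ω}
    {P : Measure Ω} {l : Filter ι} {F : ι → Ω → ℝ} (hF : ∀ i, Integrable (F i) P)
    (hF0 : ∀ i, 0 ≤ᵐ[P] F i) :
    Tendsto (fun i => ∫ ω, F i ω ∂P) l (𝓝 0) ↔
      Tendsto (fun i => ∫⁻ ω, ENNReal.ofReal (F i ω) ∂P) l (𝓝 0) := by
  have hint : ∀ i, ∫ ω, F i ω ∂P = (∫⁻ ω, ENNReal.ofReal (F i ω) ∂P).toReal := fun i =>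
    integral_eq_lintegral_of_nonneg_ae (hF0 i) (hF i).aestronglyMeasurable
  simp_rw [hint]
  exact ENNReal.tendsto_toReal_zero_iff fun i => (hF i).lintegral_lt_top.ne

section Balls

variable {𝒳 : Type*} [MetricSpace 𝒳] [MeasurableSpace 𝒳] [BorelSpace 𝒳]

theorem tendsto_measure_closedBall_nhdsGT (μ : Measure 𝒳) [IsFiniteMeasure μ] (x : 𝒳) :
    Tendsto (fun r => μ (closedBall x r)) (𝓝[>] 0) (𝓝 (μ {x})) := by
  refine ((tendsto_measure_cthickening_of_isClosed (μ := μ) (s := {x})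
    ⟨1, one_pos, measure_ne_top μ _⟩ isClosed_singleton).mono_left nhdsWithin_le_nhds).congr' ?_
  filter_upwards [self_mem_nhdsWithin] with r hr
  rw [cthickening_singleton x (le_of_lt hr)]

theorem AntitoneOn.antitone_comp_max_zero {q : ℝ → ℝ≥0∞} (hq : AntitoneOn q (Ici 0)) :
    Antitone fun r => q (max r 0) := fun r s hrs =>
  hq (show 0 ≤ max r 0 from le_max_right r 0) (show 0 ≤ max s 0 from le_max_right s 0)
    (max_le_max_right 0 hrs)

theorem AntitoneOn.measurable_comp_dist {q : ℝ → ℝ≥0∞} (hq : AntitoneOn q (Ici 0)) (x : 𝒳) :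
    Measurable fun y => q (dist x y) := by
  have hd : Measurable fun y : 𝒳 => dist x y := (continuous_const.dist continuous_id).measurable
  simpa [Function.comp_def, dist_nonneg] using hq.antitone_comp_max_zero.measurable.comp hd

theorem setLIntegral_closedBall_le_mul (μ Λ : Measure 𝒳) [SFinite μ] [SFinite Λ] {x : 𝒳}
    {δ : ℝ} {c : ℝ≥0∞} (h : ∀ r ∈ Icc 0 δ, Λ (closedBall x r) ≤ c * μ (closedBall x r))
    {q : ℝ → ℝ≥0∞} (hq : AntitoneOn q (Ici 0)) :
    ∫⁻ y in closedBall x δ, q (dist x y) ∂Λ ≤ c * ∫⁻ y in closedBall x δ, q (dist x y) ∂μ := by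
  have hd : Measurable (dist x) := (continuous_const.dist continuous_id).measurable
  have hg := hq.antitone_comp_max_zero
  have hmap : ∀ ρ : Measure 𝒳, ∫⁻ y in closedBall x δ, q (dist x y) ∂ρ =
      ∫⁻ t, q (max t 0) ∂(ρ.restrict (closedBall x δ)).map (dist x) := fun ρ => by
    rw [lintegral_map hg.measurable hd]
    simp [dist_nonneg]
  have hIic : ∀ (ρ : Measure 𝒳) r,
      (ρ.restrict (closedBall x δ)).map (dist x) (Iic r) = ρ (closedBall x (min r δ)) := by
    intro ρ r
    rw [Measure.map_apply hd measurableSet_Iic, Measure.restrict_apply (hd measurableSet_Iic)]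
    congr 1
    ext y
    simp [dist_comm]
  rw [hmap, hmap]
  refine lintegral_le_mul_of_measure_Iic_le (fun r => ?_) hg
  rw [hIic, hIic]
  rcases lt_or_ge (min r δ) 0 with hneg | hnn
  · simp [closedBall_eq_empty.2 hneg]
  · exact h _ ⟨hnn, min_le_right _ _⟩

theorem measure_setOf_lt_dist_eq_one_sub (μ : Measure 𝒳) [IsProbabilityMeasure μ] (x : 𝒳)
    (r : ℝ) :
    μ {y | r < dist x y} = 1 - μ (closedBall x r) := by
  rw [← prob_compl_eq_one_sub measurableSet_closedBall]
  congr 1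
  ext y
  simp [dist_comm]

theorem tendsto_setIntegral_closedBall_div_iff (μ : Measure 𝒳) {g : 𝒳 → ℝ} (hg : Measurable g)
    (hg0 : 0 ≤ g) [IsFiniteMeasure (μ.withDensity fun y => ENNReal.ofReal (g y))] (x : 𝒳) :
    Tendsto (fun r => (∫ y in closedBall x r, g y ∂μ) / (μ (closedBall x r)).toReal)
        (𝓝[>] 0) (𝓝 0) ↔
      Tendsto (fun r => μ.withDensity (fun y => ENNReal.ofReal (g y)) (closedBall x r) /
        μ (closedBall x r)) (𝓝[>] 0) (𝓝 0) := by
  have hint : ∀ r, (∫ y in closedBall x r, g y ∂μ) / (μ (closedBall x r)).toReal =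
      (μ.withDensity (fun y => ENNReal.ofReal (g y)) (closedBall x r) /
        μ (closedBall x r)).toReal := fun r => by
    rw [ENNReal.toReal_div, withDensity_apply _ measurableSet_closedBall,
      integral_eq_lintegral_of_nonneg_ae (Eventually.of_forall hg0) hg.aestronglyMeasurable]
  simp_rw [hint]
  exact ENNReal.tendsto_toReal_zero_iff fun r =>
    (withDensity_absolutelyContinuous μ _).measure_div_ne_top _

end Balls

section Kernel

variable {𝒳 : Type*} [MetricSpace 𝒳] [MeasurableSpace 𝒳]

/-- Bounds on the radial density `Q` of the nearest neighbour of `x` among `m` i.i.d. `μ`-points: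
without ties at radius `r` it would be `m * μ {r < dist x ·} ^ (m - 1)`; a tie-breaking selector
moves it between this and `m * μ {r ≤ dist x ·} ^ (m - 1)`. -/
def IsNearestNeighborKernel (μ : Measure 𝒳) (x : 𝒳) (m : ℕ) (Q : ℝ → ℝ≥0∞) : Prop :=
  ∀ r, 0 ≤ r → (m : ℝ≥0∞) * μ {y | r < dist x y} ^ (m - 1) ≤ Q r ∧
    Q r ≤ m * μ {y | r ≤ dist x y} ^ (m - 1)

theorem IsNearestNeighborKernel.antitoneOn {μ : Measure 𝒳} {x : 𝒳} {m : ℕ} {Q : ℝ → ℝ≥0∞}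
    (hQ : IsNearestNeighborKernel μ x m Q) : AntitoneOn Q (Ici 0) := by
  intro r hr s hs hrs
  rcases hrs.eq_or_lt with rfl | hlt
  · rfl
  calc Q s ≤ m * μ {y | s ≤ dist x y} ^ (m - 1) := (hQ s hs).2
    _ ≤ m * μ {y | r < dist x y} ^ (m - 1) := by
      gcongr
    _ ≤ Q r := (hQ r hr).1

end Kernel

theorem ENNReal.tendsto_natCast_mul_pow_pred {a : ℝ≥0∞} (ha : a < 1) :
    Tendsto (fun m : ℕ => (m : ℝ≥0∞) * a ^ (m - 1)) atTop (𝓝 0) := by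
  have ht : a.toReal < 1 := by simpa using ENNReal.toReal_strict_mono ENNReal.one_ne_top ha
  have hpow : Tendsto (fun n : ℕ => a.toReal ^ n) atTop (𝓝 0) :=
    _root_.tendsto_pow_atTop_nhds_zero_of_lt_one ENNReal.toReal_nonneg ht
  have hreal : Tendsto (fun n : ℕ => ((n : ℝ) + 1) * a.toReal ^ n) atTop (𝓝 0) := by
    simpa [add_mul] using (tendsto_self_mul_const_pow_of_lt_one ENNReal.toReal_nonneg ht).add hpow
  have := (ENNReal.tendsto_ofReal hreal).comp (tendsto_sub_atTop_nat 1)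
  rw [ENNReal.ofReal_zero] at this
  refine this.congr' ?_
  filter_upwards [eventually_ge_atTop 1] with m hm
  rw [Function.comp_apply, ENNReal.ofReal_mul (by positivity),
    ENNReal.ofReal_pow ENNReal.toReal_nonneg,
    ENNReal.ofReal_toReal (ha.trans ENNReal.one_lt_top).ne, ← Nat.cast_add_one,
    Nat.sub_add_cancel hm, ENNReal.ofReal_natCast]

theorem one_div_eight_le_ceil_mul_one_sub_pow {t : ℝ} (ht0 : 0 < t) (ht : t ≤ 1 / 4) :
    1 / 8 ≤ ⌈1 / (4 * t)⌉₊ * t * (1 - t) ^ (⌈1 / (4 * t)⌉₊ - 1) := by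
  set m := ⌈1 / (4 * t)⌉₊
  have hm : 1 ≤ m := Nat.ceil_pos.2 (by positivity)
  have hlow : 1 / 4 ≤ m * t :=
    calc (1 : ℝ) / 4 = 1 / (4 * t) * t := by field_simp
      _ ≤ m * t := by gcongr; exact Nat.le_ceil _
  have hup : m * t ≤ 1 / 2 :=
    calc (m : ℝ) * t ≤ (1 / (4 * t) + 1) * t := by
          gcongr; exact (Nat.ceil_lt_add_one (by positivity)).le
      _ = 1 / 4 + t := by field_simp
      _ ≤ 1 / 2 := by linarith
  have hbern : 1 / 2 ≤ (1 - t) ^ (m - 1) := by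
    have := one_add_mul_le_pow (a := -t) (by linarith) (m - 1)
    rw [← sub_eq_add_neg, Nat.cast_sub hm, Nat.cast_one] at this
    nlinarith
  calc (1 : ℝ) / 8 = 1 / 4 * (1 / 2) := by norm_num
    _ ≤ m * t * (1 - t) ^ (m - 1) := mul_le_mul hlow hbern (by norm_num) (by positivity)

section Lebesgue

variable {𝒳 : Type*} [MetricSpace 𝒳] [MeasurableSpace 𝒳] [BorelSpace 𝒳]

theorem IsNearestNeighborKernel.mul_measure_closedBall_le_lintegral {μ : Measure 𝒳} {x : 𝒳}
    {m : ℕ} {Q : ℝ → ℝ≥0∞} (hQ : IsNearestNeighborKernel μ x m Q) (Λ : Measure 𝒳) (r : ℝ) :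
    m * μ {y | r < dist x y} ^ (m - 1) * Λ (closedBall x r) ≤ ∫⁻ y, Q (dist x y) ∂Λ :=
  calc m * μ {y | r < dist x y} ^ (m - 1) * Λ (closedBall x r)
      = ∫⁻ _ in closedBall x r, (m : ℝ≥0∞) * μ {y | r < dist x y} ^ (m - 1) ∂Λ :=
        (setLIntegral_const _ _).symm
    _ ≤ ∫⁻ y in closedBall x r, Q (dist x y) ∂Λ := by
        refine setLIntegral_mono' measurableSet_closedBall fun y hy => ?_
        have hyr : dist x y ≤ r := by simpa [dist_comm] using hy
        calc (m : ℝ≥0∞) * μ {y | r < dist x y} ^ (m - 1)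
            ≤ m * μ {z | dist x y < dist x z} ^ (m - 1) := by gcongr
          _ ≤ Q (dist x y) := (hQ _ dist_nonneg).1
    _ ≤ ∫⁻ y, Q (dist x y) ∂Λ := setLIntegral_le_lintegral _ _

theorem IsNearestNeighborKernel.setLIntegral_compl_closedBall_le {μ : Measure 𝒳} {x : 𝒳}
    {m : ℕ} {Q : ℝ → ℝ≥0∞} (hQ : IsNearestNeighborKernel μ x m Q) (Λ : Measure 𝒳) (δ : ℝ) :
    ∫⁻ y in (closedBall x δ)ᶜ, Q (dist x y) ∂Λ ≤ m * μ {y | δ < dist x y} ^ (m - 1) * Λ univ :=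
  calc ∫⁻ y in (closedBall x δ)ᶜ, Q (dist x y) ∂Λ
      ≤ ∫⁻ _ in (closedBall x δ)ᶜ, (m : ℝ≥0∞) * μ {y | δ < dist x y} ^ (m - 1) ∂Λ := by
        refine setLIntegral_mono' measurableSet_closedBall.compl fun y hy => ?_
        have hδy : δ < dist x y := by simpa [dist_comm] using hy
        calc Q (dist x y) ≤ m * μ {z | dist x y ≤ dist x z} ^ (m - 1) := (hQ _ dist_nonneg).2
          _ ≤ m * μ {y | δ < dist x y} ^ (m - 1) := by gcongr
    _ = m * μ {y | δ < dist x y} ^ (m - 1) * Λ (closedBall x δ)ᶜ := setLIntegral_const _ _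
    _ ≤ m * μ {y | δ < dist x y} ^ (m - 1) * Λ univ := by gcongr; exact subset_univ _

theorem exists_pos_forall_Icc_measure_closedBall_le (μ Λ : Measure 𝒳) [IsFiniteMeasure μ]
    [IsFiniteMeasure Λ] {x : 𝒳} (hsupp : ∀ r > 0, 0 < μ (closedBall x r))
    (hleb : Tendsto (fun r => Λ (closedBall x r) / μ (closedBall x r)) (𝓝[>] 0) (𝓝 0))
    {e : ℝ≥0∞} (he0 : e ≠ 0) (he : e ≠ ∞) :
    ∃ δ > 0, ∀ r ∈ Icc 0 δ, Λ (closedBall x r) ≤ e * μ (closedBall x r) := by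
  have hev : ∀ᶠ r in 𝓝[>] 0, Λ (closedBall x r) ≤ e * μ (closedBall x r) := by
    filter_upwards [ENNReal.tendsto_nhds_zero.1 hleb e (pos_iff_ne_zero.2 he0),
      self_mem_nhdsWithin] with r hr hr0
    exact (ENNReal.div_le_iff (hsupp r hr0).ne' (measure_ne_top _ _)).1 hr
  have h0 : Λ {x} ≤ e * μ {x} :=
    le_of_tendsto_of_tendsto (tendsto_measure_closedBall_nhdsGT Λ x)
      (ENNReal.Tendsto.const_mul (tendsto_measure_closedBall_nhdsGT μ x) (Or.inr he)) hev
  obtain ⟨δ, hδ, hδev⟩ := (nhdsGT_basis (0 : ℝ)).eventually_iff.1 hev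
  refine ⟨δ / 2, half_pos hδ, fun r ⟨hr0, hrδ⟩ => ?_⟩
  rcases hr0.eq_or_lt with rfl | hpos
  · rwa [closedBall_zero]
  · exact hδev ⟨hpos, by linarith⟩

theorem tendsto_lintegral_kernel_of_tendsto_div (μ Λ : Measure 𝒳) [IsProbabilityMeasure μ]
    [IsFiniteMeasure Λ] {x : 𝒳} (hsupp : ∀ r > 0, 0 < μ (closedBall x r))
    {Q : ℕ → ℝ → ℝ≥0∞} (hQ : ∀ m, IsNearestNeighborKernel μ x m (Q m))
    (hQ1 : ∀ m, ∫⁻ y, Q m (dist x y) ∂μ ≤ 1)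
    (hleb : Tendsto (fun r => Λ (closedBall x r) / μ (closedBall x r)) (𝓝[>] 0) (𝓝 0)) :
    Tendsto (fun m => ∫⁻ y, Q m (dist x y) ∂Λ) atTop (𝓝 0) := by
  rw [ENNReal.tendsto_nhds_zero]
  intro ε hε
  rcases eq_or_ne ε ∞ with rfl | hε_top
  · simp
  set e := ε / 2
  have he0 : e ≠ 0 := (ENNReal.half_pos hε.ne').ne'
  have he : e ≠ ∞ := ENNReal.div_ne_top hε_top two_ne_zero
  obtain ⟨δ, hδ, hball⟩ := exists_pos_forall_Icc_measure_closedBall_le μ Λ hsupp hleb he0 he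
  have ha : μ {y | δ < dist x y} < 1 := by
    rw [measure_setOf_lt_dist_eq_one_sub]
    exact ENNReal.sub_lt_self ENNReal.one_ne_top one_ne_zero (hsupp δ hδ).ne'
  have htail := ENNReal.Tendsto.mul_const (ENNReal.tendsto_natCast_mul_pow_pred ha)
    (Or.inr (measure_ne_top Λ univ))
  rw [zero_mul] at htail
  filter_upwards [ENNReal.tendsto_nhds_zero.1 htail e (pos_iff_ne_zero.2 he0)] with m hm
  have hhead : ∫⁻ y in closedBall x δ, Q m (dist x y) ∂Λ ≤ e :=
    calc ∫⁻ y in closedBall x δ, Q m (dist x y) ∂Λ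
        ≤ e * ∫⁻ y in closedBall x δ, Q m (dist x y) ∂μ :=
          setLIntegral_closedBall_le_mul μ Λ hball (hQ m).antitoneOn
      _ ≤ e * 1 := by
          gcongr
          exact (setLIntegral_le_lintegral _ _).trans (hQ1 m)
      _ = e := mul_one e
  rw [← lintegral_add_compl _ measurableSet_closedBall (μ := Λ) (A := closedBall x δ)]
  calc _ ≤ e + e := add_le_add hhead (((hQ m).setLIntegral_compl_closedBall_le Λ δ).trans hm)
    _ = ε := ENNReal.add_halves ε

end Lebesgue

section Converse

variable {𝒳 : Type*} [MetricSpace 𝒳] [MeasurableSpace 𝒳] [BorelSpace 𝒳]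

theorem tendsto_measure_closedBall_div_of_measure_singleton (μ Λ : Measure 𝒳)
    [IsFiniteMeasure μ] [IsFiniteMeasure Λ] {x : 𝒳} (hx : μ {x} ≠ 0) (hΛx : Λ {x} = 0) :
    Tendsto (fun r => Λ (closedBall x r) / μ (closedBall x r)) (𝓝[>] 0) (𝓝 0) := by
  have h := ENNReal.Tendsto.div_const (tendsto_measure_closedBall_nhdsGT Λ x) (Or.inr hx)
  rw [hΛx, ENNReal.zero_div] at h
  refine tendsto_of_tendsto_of_tendsto_of_le_of_le' tendsto_const_nhds h
    (Eventually.of_forall fun _ => zero_le) ?_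
  filter_upwards [self_mem_nhdsWithin] with r hr
  exact ENNReal.div_le_div_left
    (measure_mono (singleton_subset_iff.2 (mem_closedBall_self (le_of_lt hr)))) _

theorem frequently_le_lintegral_kernel (μ Λ : Measure 𝒳) [IsProbabilityMeasure μ] {x : 𝒳}
    (hsupp : ∀ r > 0, 0 < μ (closedBall x r)) (hx : μ {x} = 0) {Q : ℕ → ℝ → ℝ≥0∞}
    (hQ : ∀ m, IsNearestNeighborKernel μ x m (Q m)) {ε : ℝ≥0∞}
    (hfreq : ∃ᶠ r in 𝓝[>] 0, ε * μ (closedBall x r) ≤ Λ (closedBall x r)) :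
    ∃ᶠ m in atTop, ε / 8 ≤ ∫⁻ y, Q m (dist x y) ∂Λ := by
  rw [frequently_atTop]
  intro N
  have hsmall : ∀ᶠ r in 𝓝[>] 0, μ (closedBall x r) < ENNReal.ofReal (1 / (4 * (N + 1))) := by
    have h := tendsto_measure_closedBall_nhdsGT μ x
    rw [hx] at h
    exact h.eventually (gt_mem_nhds (ENNReal.ofReal_pos.2 (by positivity)))
  obtain ⟨r, ⟨hr, hrN⟩, hr0⟩ :=
    ((hfreq.and_eventually hsmall).and_eventually self_mem_nhdsWithin).exists
  set t := (μ (closedBall x r)).toReal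
  have ht0 : 0 < t := ENNReal.toReal_pos (hsupp r hr0).ne' (measure_ne_top _ _)
  have htN : t < 1 / (4 * (N + 1)) := ENNReal.toReal_lt_of_lt_ofReal hrN
  have ht4 : t ≤ 1 / 4 := htN.le.trans (by gcongr; linarith [(N.cast_nonneg : (0 : ℝ) ≤ N)])
  -- a sample of this size has its nearest neighbour in a ball of mass `t` with probability `≍ 1`
  set m := ⌈1 / (4 * t)⌉₊
  have hNm : N ≤ m := by
    have : (N : ℝ) + 1 < 1 / (4 * t) := by
      rw [lt_div_iff₀ (by positivity)]
      rw [lt_div_iff₀ (by positivity)] at htN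
      linarith
    exact_mod_cast (by linarith [Nat.le_ceil (1 / (4 * t))] : (N : ℝ) ≤ m)
  have hc : 8⁻¹ ≤ m * μ {y | r < dist x y} ^ (m - 1) * μ (closedBall x r) := by
    rw [← ENNReal.ofReal_toReal (a := _ * μ (closedBall x r)) (by finiteness)]
    simp only [measure_setOf_lt_dist_eq_one_sub, ENNReal.toReal_mul, ENNReal.toReal_pow,
      ENNReal.toReal_natCast, ENNReal.toReal_sub_of_le prob_le_one ENNReal.one_ne_top,
      ENNReal.toReal_one]
    rw [← one_div, ← ENNReal.ofReal_ofNat 8, ← ENNReal.ofReal_one,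
      ← ENNReal.ofReal_div_of_pos (by norm_num)]
    refine ENNReal.ofReal_le_ofReal ((one_div_eight_le_ceil_mul_one_sub_pow ht0 ht4).trans_eq ?_)
    ring
  refine ⟨m, hNm, ?_⟩
  calc ε / 8 ≤ ε * (m * μ {y | r < dist x y} ^ (m - 1) * μ (closedBall x r)) := by
        rw [div_eq_mul_inv]
        gcongr
    _ ≤ m * μ {y | r < dist x y} ^ (m - 1) * Λ (closedBall x r) := by
        rw [mul_left_comm]
        gcongr
    _ ≤ ∫⁻ y, Q m (dist x y) ∂Λ := (hQ m).mul_measure_closedBall_le_lintegral Λ r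

theorem tendsto_div_of_tendsto_lintegral_kernel (μ Λ : Measure 𝒳) [IsProbabilityMeasure μ]
    {x : 𝒳} (hsupp : ∀ r > 0, 0 < μ (closedBall x r)) (hx : μ {x} = 0) {Q : ℕ → ℝ → ℝ≥0∞}
    (hQ : ∀ m, IsNearestNeighborKernel μ x m (Q m))
    (hL : Tendsto (fun m => ∫⁻ y, Q m (dist x y) ∂Λ) atTop (𝓝 0)) :
    Tendsto (fun r => Λ (closedBall x r) / μ (closedBall x r)) (𝓝[>] 0) (𝓝 0) := by
  by_contra hleb
  simp only [ENNReal.tendsto_nhds_zero, not_forall, not_eventually, not_le] at hleb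
  obtain ⟨ε, hε, hfreq⟩ := hleb
  have hsmall :=
    hL.eventually (gt_mem_nhds (ENNReal.div_pos hε.ne' (by norm_num : (8 : ℝ≥0∞) ≠ ∞)))
  obtain ⟨m, hm, hm'⟩ := ((frequently_le_lintegral_kernel μ Λ hsupp hx hQ
    (hfreq.mono fun r hr => ENNReal.mul_le_of_le_div hr.le)).and_eventually hsmall).exists
  exact hm.not_gt hm'

theorem tendsto_measure_closedBall_div_iff (μ Λ : Measure 𝒳) [IsProbabilityMeasure μ]
    [IsFiniteMeasure Λ] {x : 𝒳} (hsupp : ∀ r > 0, 0 < μ (closedBall x r)) {Q : ℕ → ℝ → ℝ≥0∞}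
    (hQ : ∀ m, IsNearestNeighborKernel μ x m (Q m)) (hQ1 : ∀ m, ∫⁻ y, Q m (dist x y) ∂μ ≤ 1)
    {L : ℕ → ℝ≥0∞} (hLQ : (fun m => ∫⁻ y, Q m (dist x y) ∂Λ) =ᶠ[atTop] L)
    (hLx : ∀ᶠ m in atTop, Λ {x} ≤ L m) :
    Tendsto (fun r => Λ (closedBall x r) / μ (closedBall x r)) (𝓝[>] 0) (𝓝 0) ↔
      Tendsto L atTop (𝓝 0) := by
  refine ⟨fun hleb => (tendsto_lintegral_kernel_of_tendsto_div μ Λ hsupp hQ hQ1 hleb).congr' hLQ,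
    fun hL => ?_⟩
  by_cases hx : μ {x} = 0
  · exact tendsto_div_of_tendsto_lintegral_kernel μ Λ hsupp hx hQ (hL.congr' hLQ.symm)
  · exact tendsto_measure_closedBall_div_of_measure_singleton μ Λ hx
      (le_zero_iff.1 (ge_of_tendsto hL hLx))

end Converse

theorem lintegral_pi_eq_lintegral_update {ι : Type*} [Fintype ι] [DecidableEq ι] {X : ι → Type*}
    [∀ i, MeasurableSpace (X i)] (μ : ∀ i, Measure (X i)) [∀ i, IsProbabilityMeasure (μ i)]
    (k : ι) {F : (∀ i, X i) → ℝ≥0∞} (hF : Measurable F) :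
    ∫⁻ v, F v ∂Measure.pi μ = ∫⁻ v, ∫⁻ y, F (Function.update v k y) ∂μ k ∂Measure.pi μ := by
  refine lintegral_eq_of_lmarginal_eq {k} hF
    ((hF.comp measurable_update').lintegral_prod_right') ?_
  ext v
  simp_rw [lmarginal_singleton, Function.update_idem, lintegral_const, measure_univ, mul_one]

theorem measure_pi_prod_forall_ne_mem {α Z : Type*} [MeasurableSpace α] [MeasurableSpace Z]
    (μ : Measure α) (ν : Measure Z) [IsProbabilityMeasure μ] [IsProbabilityMeasure ν] {m : ℕ}
    (k : Fin m) (T : Set α) :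
    ((Measure.pi fun _ : Fin m => μ).prod ν) {p | ∀ i, i ≠ k → p.1 i ∈ T} = μ T ^ (m - 1) := by
  have hset : {p : (Fin m → α) × Z | ∀ i, i ≠ k → p.1 i ∈ T} =
      univ.pi (Function.update (fun _ => T) k univ) ×ˢ univ := by
    ext p
    simp only [mem_ofPred_eq, mem_prod, Set.mem_pi, mem_univ, forall_const, and_true]
    refine forall_congr' fun i => ?_
    by_cases hik : i = k
    · subst hik
      simp
    · simp [hik]
  rw [hset, Measure.prod_prod, Measure.pi_pi, measure_univ, mul_one]
  simp_rw [Function.apply_update (fun _ => μ)]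
  rw [Finset.prod_update_of_mem (Finset.mem_univ k), measure_univ, one_mul, Finset.prod_const,
    Finset.card_sdiff, Finset.card_univ, Fintype.card_fin, Finset.inter_univ,
    Finset.card_singleton]

section DistProfile

variable {𝒳 : Type*} [MetricSpace 𝒳]

/-- Padded by `0` beyond `m`, so that it can be fed to a selector `(ℕ → ℝ) × Z → ℕ`. -/
def distProfile (x : 𝒳) {m : ℕ} (v : Fin m → 𝒳) (i : ℕ) : ℝ :=
  if h : i < m then dist x (v ⟨i, h⟩) else 0

theorem distProfile_nonneg (x : 𝒳) {m : ℕ} (v : Fin m → 𝒳) (i : ℕ) : 0 ≤ distProfile x v i := by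
  unfold distProfile
  split_ifs
  exacts [dist_nonneg, le_rfl]

@[simp]
theorem distProfile_fin (x : 𝒳) {m : ℕ} (v : Fin m → 𝒳) (k : Fin m) :
    distProfile x v k = dist x (v k) := by
  simp [distProfile]

theorem distProfile_update (x : 𝒳) {m : ℕ} (v : Fin m → 𝒳) (k : Fin m) (y : 𝒳) :
    distProfile x (Function.update v k y) = Function.update (distProfile x v) k (dist x y) := by
  funext i
  by_cases hi : i < m
  · by_cases hik : i = k
    · subst hik
      simp
    · have hik' : (⟨i, hi⟩ : Fin m) ≠ k := fun h => hik (congrArg Fin.val h)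
      simp [distProfile, hi, hik, Function.update_of_ne hik']
  · have hik : i ≠ k := fun h => hi (h ▸ k.2)
    simp [distProfile, hi, hik]

theorem update_distProfile_nonneg (x : 𝒳) {m : ℕ} (v : Fin m → 𝒳) (k : Fin m) {r : ℝ}
    (hr : 0 ≤ r) (i : ℕ) : 0 ≤ Function.update (distProfile x v) k r i := by
  rcases eq_or_ne i k with rfl | hik
  · simpa using hr
  · simpa [Function.update_of_ne hik] using distProfile_nonneg x v i

def IsArgminSelector {Z : Type*} (m : ℕ) (ψ : (ℕ → ℝ) × Z → ℕ) : Prop :=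
  ∀ (f : ℕ → ℝ) (z : Z), (∀ i, 0 ≤ f i) → ψ (f, z) < m ∧ ∀ j < m, f (ψ (f, z)) ≤ f j

variable {Z : Type*} (ψ : (ℕ → ℝ) × Z → ℕ) (x : 𝒳)

def selectionEvent {m : ℕ} (k : Fin m) (r : ℝ) : Set ((Fin m → 𝒳) × Z) :=
  {p | ψ (Function.update (distProfile x p.1) k r, p.2) = k}

theorem setOf_forall_ne_lt_subset_selectionEvent {m : ℕ} (hψ : IsArgminSelector m ψ) (k : Fin m)
    {r : ℝ} (hr : 0 ≤ r) :
    {p : (Fin m → 𝒳) × Z | ∀ i, i ≠ k → p.1 i ∈ {y | r < dist x y}} ⊆ selectionEvent ψ x k r := by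
  intro p hp
  obtain ⟨hlt, hmin⟩ := hψ _ p.2 (update_distProfile_nonneg x p.1 k hr)
  by_contra hne
  have hjk : (⟨_, hlt⟩ : Fin m) ≠ k := fun h => hne (congrArg Fin.val h)
  have hne' : ψ (Function.update (distProfile x p.1) k r, p.2) ≠ k := hne
  have := hmin k k.2
  rw [Function.update_self, Function.update_of_ne hne'] at this
  exact (hp _ hjk).not_ge (by simpa [distProfile, hlt] using this)

theorem selectionEvent_subset_setOf_forall_ne_le {m : ℕ} (hψ : IsArgminSelector m ψ) (k : Fin m)
    {r : ℝ} (hr : 0 ≤ r) :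
    selectionEvent ψ x k r ⊆ {p : (Fin m → 𝒳) × Z | ∀ i, i ≠ k → p.1 i ∈ {y | r ≤ dist x y}} := by
  intro p hp i hik
  have := (hψ _ p.2 (update_distProfile_nonneg x p.1 k hr)).2 i i.2
  rw [show ψ (Function.update (distProfile x p.1) k r, p.2) = k from hp, Function.update_self,
    Function.update_of_ne fun h => hik (Fin.ext h), distProfile_fin] at this
  exact this

end DistProfile

section Selection

variable {𝒳 Z : Type*} [MetricSpace 𝒳] [MeasurableSpace 𝒳] [MeasurableSpace Z]

theorem measurable_distProfile [BorelSpace 𝒳] (x : 𝒳) (m : ℕ) :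
    Measurable (distProfile x : (Fin m → 𝒳) → ℕ → ℝ) := by
  refine measurable_pi_lambda _ fun i => ?_
  unfold distProfile
  split_ifs
  exacts [(continuous_const.dist continuous_id).measurable.comp (measurable_pi_apply _),
    measurable_const]

variable (μ : Measure 𝒳) (ν : Measure Z) (ψ : (ℕ → ℝ) × Z → ℕ) (x : 𝒳)

theorem measurableSet_selectionEvent [BorelSpace 𝒳] (hψ : Measurable ψ) {m : ℕ} (k : Fin m) :
    MeasurableSet {q : ℝ × ((Fin m → 𝒳) × Z) | q.2 ∈ selectionEvent ψ x k q.1} :=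
  (hψ.comp ((measurable_update'.comp (((measurable_distProfile x m).comp
    (measurable_fst.comp measurable_snd)).prodMk measurable_fst)).prodMk
      (measurable_snd.comp measurable_snd))) (measurableSet_singleton _)

variable (m : ℕ)

/-- `y ↦ selectionKernel μ ν ψ x m (dist x y)` is the density of the selected sample point with
respect to `μ` (`lintegral_sum_ite_eq_lintegral_selectionKernel`). -/
noncomputable def selectionKernel (r : ℝ) : ℝ≥0∞ :=
  ∑ k : Fin m, ((Measure.pi fun _ : Fin m => μ).prod ν) (selectionEvent ψ x k r)

theorem isNearestNeighborKernel_selectionKernel [IsProbabilityMeasure μ]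
    [IsProbabilityMeasure ν] (hψ : 1 ≤ m → IsArgminSelector m ψ) :
    IsNearestNeighborKernel μ x m (selectionKernel μ ν ψ x m) := by
  intro r hr
  have hsum : ∀ a : ℝ≥0∞, (m : ℝ≥0∞) * a = ∑ _k : Fin m, a := by simp
  rw [hsum, hsum]
  refine ⟨Finset.sum_le_sum fun k _ => ?_, Finset.sum_le_sum fun k _ => ?_⟩
  · rw [← measure_pi_prod_forall_ne_mem μ ν k]
    exact measure_mono (setOf_forall_ne_lt_subset_selectionEvent ψ x (hψ k.pos) k hr)
  · rw [← measure_pi_prod_forall_ne_mem μ ν k]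
    exact measure_mono (selectionEvent_subset_setOf_forall_ne_le ψ x (hψ k.pos) k hr)

theorem measurable_ite_selected [BorelSpace 𝒳] (hψ : Measurable ψ) {f : 𝒳 → ℝ≥0∞}
    (hf : Measurable f) (k : Fin m) : Measurable fun p : (Fin m → 𝒳) × Z =>
      if ψ (distProfile x p.1, p.2) = k then f (p.1 k) else 0 :=
  Measurable.ite ((hψ.comp (((measurable_distProfile x m).comp measurable_fst).prodMk
    measurable_snd)) (measurableSet_singleton _))
    (hf.comp ((measurable_pi_apply k).comp measurable_fst)) measurable_const

/-- The sum over `k` evaluates `f` at the selected sample point without needing a proof that its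
index is smaller than `m`. -/
theorem lintegral_sum_ite_eq_lintegral_selectionKernel [BorelSpace 𝒳] [IsProbabilityMeasure μ]
    [IsProbabilityMeasure ν] (hψ : Measurable ψ) {f : 𝒳 → ℝ≥0∞} (hf : Measurable f) :
    ∫⁻ p, ∑ k : Fin m, (if ψ (distProfile x p.1, p.2) = k then f (p.1 k) else 0)
        ∂((Measure.pi fun _ : Fin m => μ).prod ν) =
      ∫⁻ y, f y * selectionKernel μ ν ψ x m (dist x y) ∂μ := by
  set π := Measure.pi fun _ : Fin m => μ
  have hterm := measurable_ite_selected ψ x m hψ hf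
  have hkernel : ∀ k : Fin m, Measurable fun y => (π.prod ν) (selectionEvent ψ x k (dist x y)) :=
    fun k => (measurable_measure_prodMk_left (measurableSet_selectionEvent ψ x hψ k)).comp
      (continuous_const.dist continuous_id).measurable
  have hk : ∀ k : Fin m,
      ∫⁻ p, (if ψ (distProfile x p.1, p.2) = k then f (p.1 k) else 0) ∂(π.prod ν) =
        ∫⁻ y, f y * (π.prod ν) (selectionEvent ψ x k (dist x y)) ∂μ := by
    intro k
    have hupd : Measurable fun q : ((Fin m → 𝒳) × 𝒳) × Z =>
        if ψ (distProfile x (Function.update q.1.1 k q.1.2), q.2) = k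
        then f (Function.update q.1.1 k q.1.2 k) else 0 :=
      (hterm k).comp ((measurable_update'.comp measurable_fst).prodMk measurable_snd)
    rw [lintegral_prod _ (hterm k).aemeasurable,
      lintegral_pi_eq_lintegral_update _ k (hterm k).lintegral_prod_right',
      lintegral_lintegral_swap hupd.lintegral_prod_right'.aemeasurable]
    refine lintegral_congr fun y => ?_
    have hA : MeasurableSet (selectionEvent ψ x k (dist x y)) :=
      measurable_prodMk_left (measurableSet_selectionEvent ψ x hψ k)
    simp only [Function.update_self, distProfile_update]
    rw [Measure.prod_apply hA, ← lintegral_const_mul _ (measurable_measure_prodMk_left hA)]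
    refine lintegral_congr fun v => ?_
    rw [← lintegral_indicator_const (measurable_prodMk_left hA)]
    congr with z
    simp [Set.indicator_apply, selectionEvent]
  simp_rw [lintegral_finsetSum _ fun k _ => hterm k, hk, selectionKernel, Finset.mul_sum]
  exact (lintegral_finsetSum _ fun k _ => hf.mul (hkernel k)).symm

theorem lintegral_selectionKernel_le_one [BorelSpace 𝒳] [IsProbabilityMeasure μ]
    [IsProbabilityMeasure ν] (hψ : Measurable ψ) :
    ∫⁻ y, selectionKernel μ ν ψ x m (dist x y) ∂μ ≤ 1 := by
  have h := lintegral_sum_ite_eq_lintegral_selectionKernel μ ν ψ x m hψ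
    (measurable_const (a := (1 : ℝ≥0∞)))
  simp only [one_mul] at h
  rw [← h]
  calc _ ≤ ∫⁻ _, 1 ∂((Measure.pi fun _ : Fin m => μ).prod ν) := lintegral_mono fun p => ?_
    _ = 1 := by simp
  rw [Finset.sum_boole]
  refine Nat.cast_le_one.2 (Finset.card_le_one.2 fun k hk k' hk' => ?_)
  simp only [Finset.mem_filter, Finset.mem_univ, true_and] at hk hk'
  exact Fin.ext (hk.symm.trans hk')

end Selection

section Sampling

variable {Ω 𝒳 Z : Type*} {mΩ : MeasurableSpace Ω} [MeasurableSpace 𝒳] [MeasurableSpace Z]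
  {P : Measure Ω} {X : ℕ → Ω → 𝒳} {μ : Measure 𝒳} {θ : Ω → Z}

theorem map_sample_prod_eq [IsProbabilityMeasure P] (hXmeas : ∀ i, Measurable (X i))
    (hXindep : iIndepFun X P) (hXdist : ∀ i, P.map (X i) = μ) (hθ : Measurable θ) {m : ℕ}
    (hθindep : IndepFun θ (fun ω (i : Fin m) => X i ω) P) :
    P.map (fun ω => ((fun i : Fin m => X i ω), θ ω)) =
      (Measure.pi fun _ : Fin m => μ).prod (P.map θ) := by
  have hY : Measurable fun ω (i : Fin m) => X i ω := measurable_pi_lambda _ fun i => hXmeas i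
  have hpi : iIndepFun (fun i : Fin m => X i) P := hXindep.precomp Fin.val_injective
  rw [(indepFun_iff_map_prod_eq_prod_map_map hY.aemeasurable hθ.aemeasurable).1 hθindep.symm,
    hpi.map_fun_eq_pi_map fun i : Fin m => (hXmeas i).aemeasurable]
  simp [hXdist]

theorem measurable_nearestNeighbor [MetricSpace 𝒳] [BorelSpace 𝒳] (hXmeas : ∀ i, Measurable (X i))
    (hθ : Measurable θ) {ψ : (ℕ → ℝ) × Z → ℕ} (hψ : Measurable ψ) (x : 𝒳) :
    Measurable fun ω => X (ψ (fun i => dist x (X i ω), θ ω)) ω := by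
  have hidx : Measurable fun ω => ψ (fun i => dist x (X i ω), θ ω) :=
    hψ.comp ((measurable_pi_lambda _ fun i =>
      (continuous_const.dist continuous_id).measurable.comp (hXmeas i)).prodMk hθ)
  exact (measurable_from_prod_countable_left (f := fun p : Ω × ℕ => X p.2 p.1) hXmeas).comp
    (measurable_id.prodMk hidx)

theorem lintegral_comp_nearestNeighbor [MetricSpace 𝒳] [BorelSpace 𝒳] [IsProbabilityMeasure P]
    (hXmeas : ∀ i, Measurable (X i)) (hXindep : iIndepFun X P) (hXdist : ∀ i, P.map (X i) = μ)
    (hθ : Measurable θ) {m : ℕ} (hθindep : IndepFun θ (fun ω (i : Fin m) => X i ω) P)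
    {ψ : (ℕ → ℝ) × Z → ℕ} (hψ : Measurable ψ)
    (hψdep : ∀ (f g : ℕ → ℝ) (z : Z), (∀ i < m, f i = g i) → ψ (f, z) = ψ (g, z))
    (hψmin : IsArgminSelector m ψ) (x : 𝒳) {f : 𝒳 → ℝ≥0∞} (hf : Measurable f) :
    ∫⁻ ω, f (X (ψ (fun i => dist x (X i ω), θ ω)) ω) ∂P =
      ∫⁻ y, f y * selectionKernel μ (P.map θ) ψ x m (dist x y) ∂μ := by
  have : IsProbabilityMeasure μ :=
    hXdist 0 ▸ Measure.isProbabilityMeasure_map (hXmeas 0).aemeasurable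
  have := Measure.isProbabilityMeasure_map (μ := P) hθ.aemeasurable
  set F : (Fin m → 𝒳) × Z → ℝ≥0∞ :=
    fun p => ∑ k : Fin m, if ψ (distProfile x p.1, p.2) = k then f (p.1 k) else 0
  have hsample : Measurable fun ω => ((fun i : Fin m => X i ω), θ ω) :=
    (measurable_pi_lambda _ fun i : Fin m => hXmeas i).prodMk hθ
  have hpt : ∀ ω, f (X (ψ (fun i => dist x (X i ω), θ ω)) ω) =
      F ((fun i : Fin m => X i ω), θ ω) := by
    intro ω
    have hidx : ψ (fun i => dist x (X i ω), θ ω) =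
        ψ (distProfile x (fun i : Fin m => X i ω), θ ω) :=
      hψdep _ _ _ fun i hi => by simp [distProfile, hi]
    have hlt := (hψmin _ (θ ω) (distProfile_nonneg x fun i : Fin m => X i ω)).1
    simp only [F, hidx]
    rw [Finset.sum_eq_single ⟨_, hlt⟩ (fun k _ hk => if_neg fun h => hk (Fin.ext h.symm))
      (by simp)]
    simp
  calc ∫⁻ ω, f (X (ψ (fun i => dist x (X i ω), θ ω)) ω) ∂P
      = ∫⁻ ω, F ((fun i : Fin m => X i ω), θ ω) ∂P := lintegral_congr hpt
    _ = ∫⁻ p, F p ∂(P.map fun ω => ((fun i : Fin m => X i ω), θ ω)) :=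
      (lintegral_map (Finset.measurable_sum _ fun k _ => measurable_ite_selected ψ x m hψ hf k)
        hsample).symm
    _ = ∫⁻ y, f y * selectionKernel μ (P.map θ) ψ x m (dist x y) ∂μ := by
      rw [map_sample_prod_eq hXmeas hXindep hXdist hθ hθindep,
        lintegral_sum_ite_eq_lintegral_selectionKernel _ _ _ _ _ hψ hf]

end Sampling

theorem mul_measure_singleton_le_lintegral_nearestNeighbor {Ω 𝒳 Z : Type*}
    {mΩ : MeasurableSpace Ω} [MetricSpace 𝒳] [MeasurableSpace 𝒳] [BorelSpace 𝒳] {P : Measure Ω}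
    {X : ℕ → Ω → 𝒳} {μ : Measure 𝒳} {θ : Ω → Z} (hX0 : Measurable (X 0))
    (hX0dist : P.map (X 0) = μ) {m : ℕ} (hm : 0 < m) {ψ : (ℕ → ℝ) × Z → ℕ}
    (hψ : IsArgminSelector m ψ) (x : 𝒳) (f : 𝒳 → ℝ≥0∞) :
    f x * μ {x} ≤ ∫⁻ ω, f (X (ψ (fun i => dist x (X i ω), θ ω)) ω) ∂P := by
  have hS : MeasurableSet (X 0 ⁻¹' {x}) := hX0 (measurableSet_singleton x)
  calc f x * μ {x} = ∫⁻ _ in X 0 ⁻¹' {x}, f x ∂P := by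
        rw [setLIntegral_const, ← hX0dist, Measure.map_apply hX0 (measurableSet_singleton x)]
    _ = ∫⁻ ω in X 0 ⁻¹' {x}, f (X (ψ (fun i => dist x (X i ω), θ ω)) ω) ∂P := by
        refine setLIntegral_congr_fun hS fun ω hω => ?_
        have h := (hψ (fun i => dist x (X i ω)) (θ ω) fun _ => dist_nonneg).2 0 hm
        rw [show X 0 ω = x from hω, dist_self] at h
        exact congrArg f (dist_le_zero.1 h)
    _ ≤ _ := setLIntegral_le_lintegral _ _

/-- **Corollary (Lebesgue values via ISIMIN nearest neighbors).**
Setting: `X 0, X 1, …` i.i.d. with common distribution `μ`, `x` in the support of `μ`,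
`η` bounded measurable, `(ψ m, Θ m)` an ISIMIN, `NN m` the nearest neighbor of `x`
among `X 0, …, X (m-1)` according to `(ψ m, Θ m)`, and `l ∈ ℝ`. Then `l` is the
Lebesgue value of `η` at `x` with respect to `μ` iff `𝔼[|η(NN m) − l|] → 0` as
`m → ∞`. -/
theorem stmt_15
    {𝒳 Ω : Type*} [MetricSpace 𝒳] [MeasurableSpace 𝒳] [BorelSpace 𝒳]
    {mΩ : MeasurableSpace Ω} (P : Measure Ω) [IsProbabilityMeasure P]
    (X : ℕ → Ω → 𝒳) (μ : Measure 𝒳)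
    (hXmeas : ∀ i, Measurable (X i))
    (hXindep : ProbabilityTheory.iIndepFun (m := fun _ => (inferInstance : MeasurableSpace 𝒳)) X P)
    (hXdist : ∀ i, P.map (X i) = μ)
    (x : 𝒳) (hsupp : ∀ r > (0 : ℝ), 0 < μ (Metric.closedBall x r))
    (η : 𝒳 → ℝ) (hηmeas : Measurable η) (C : ℝ) (hηbdd : ∀ y, |η y| ≤ C)
    (𝒵 : ℕ → Type*) [∀ m, MeasurableSpace (𝒵 m)]
    (Θ : ∀ m : ℕ, Ω → 𝒵 m) (hΘmeas : ∀ m, Measurable (Θ m))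
    (hΘindep : ∀ m : ℕ,
      ProbabilityTheory.IndepFun (Θ m) (fun ω => fun i : Fin m => X (i : ℕ) ω) P)
    (ψ : ∀ m : ℕ, ((ℕ → ℝ) × 𝒵 m) → ℕ)
    (hψmeas : ∀ m, Measurable (ψ m))
    (hψdep : ∀ m : ℕ, ∀ f g : ℕ → ℝ, ∀ z : 𝒵 m,
      (∀ i < m, f i = g i) → ψ m (f, z) = ψ m (g, z))
    (hψmin : ∀ m : ℕ, 1 ≤ m → ∀ (f : ℕ → ℝ) (z : 𝒵 m), (∀ i, 0 ≤ f i) →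
      ψ m (f, z) < m ∧ ∀ j < m, f (ψ m (f, z)) ≤ f j)
    (NN : ℕ → Ω → 𝒳)
    (hNNdef : ∀ (m : ℕ) (ω : Ω),
      NN m ω = X (ψ m (fun i => dist x (X i ω), Θ m ω)) ω)
    (l : ℝ) :
    (Tendsto
      (fun r : ℝ =>
        (∫ y in Metric.closedBall x r, |η y - l| ∂μ) /
          (μ (Metric.closedBall x r)).toReal)
      (𝓝[>] 0) (𝓝 0)) ↔
    Tendsto (fun m : ℕ => ∫ ω, |η (NN m ω) - l| ∂P) atTop (𝓝 0) := by
  have : IsProbabilityMeasure μ :=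
    hXdist 0 ▸ Measure.isProbabilityMeasure_map (hXmeas 0).aemeasurable
  have := fun m => Measure.isProbabilityMeasure_map (μ := P) (hΘmeas m).aemeasurable
  have hg : Measurable fun y => |η y - l| := by fun_prop
  have hgC : ∀ y, ‖|η y - l|‖ ≤ C + |l| := fun y => by
    rw [Real.norm_eq_abs, abs_abs]
    exact (abs_sub _ _).trans (by linarith [hηbdd y])
  have hNN : ∀ m, Measurable (NN m) := fun m => by
    simpa only [← funext (hNNdef m)] using
      measurable_nearestNeighbor hXmeas (hΘmeas m) (hψmeas m) x
  have hφ : Measurable fun y => ENNReal.ofReal |η y - l| := ENNReal.measurable_ofReal.comp hg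
  have : IsFiniteMeasure (μ.withDensity fun y => ENNReal.ofReal |η y - l|) :=
    isFiniteMeasure_withDensity_ofReal (.of_bounded (ae_of_all _ hgC))
  rw [tendsto_setIntegral_closedBall_div_iff μ hg (fun _ => abs_nonneg _) x,
    tendsto_integral_iff_tendsto_lintegral_ofReal (F := fun m ω => |η (NN m ω) - l|)
      (fun m => .of_bound (hg.comp (hNN m)).aestronglyMeasurable _ (ae_of_all _ fun _ => hgC _))
      (fun m => ae_of_all _ fun _ => abs_nonneg _)]
  have hQ : ∀ m, IsNearestNeighborKernel μ x m (selectionKernel μ (P.map (Θ m)) (ψ m) x m) :=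
    fun m => isNearestNeighborKernel_selectionKernel _ _ _ _ _ (hψmin m)
  refine tendsto_measure_closedBall_div_iff μ _ hsupp hQ
    (fun m => lintegral_selectionKernel_le_one _ _ _ _ _ (hψmeas m)) ?_ ?_
  · filter_upwards [eventually_ge_atTop 1] with m hm
    simp_rw [hNNdef, lintegral_comp_nearestNeighbor hXmeas hXindep hXdist (hΘmeas m) (hΘindep m)
      (hψmeas m) (hψdep m) (hψmin m hm) x hφ]
    exact lintegral_withDensity_eq_lintegral_mul _ hφ ((hQ m).antitoneOn.measurable_comp_dist x)
  · filter_upwards [eventually_ge_atTop 1] with m hm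
    rw [withDensity_apply _ (measurableSet_singleton x), lintegral_singleton]
    simp only [hNNdef]
    exact mul_measure_singleton_le_lintegral_nearestNeighbor (hXmeas 0) (hXdist 0) hm
      (hψmin m hm) x fun y => ENNReal.ofReal |η y - l|
end

section
/- Let (Ω, ℱ, ℙ) be a probability space, (𝒱, ℱ_𝒱) and (𝒲, ℱ_𝒲) measurable spaces, and let U : Ω → [0,∞], f : 𝒱 × 𝒲 → [0,∞], V : Ω → 𝒱, W : Ω → 𝒲 be measurable. If the pair (U, V) is independent of W under ℙ, then 𝔼[U·f(V, W) ∣ V] = 𝔼[U ∣ V] · 𝔼[f(V, W) ∣ V] ℙ-almost surely. -/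
open MeasureTheory Filter Topology ENNReal

/-! Condition on `V` and integrate out `W`. Since `(U, V)` is independent of `W`, on every event
`{V ∈ A}` the variable `U · f(V, W)` has the same integral as `U · F(V)`, where
`F v = ∫ f(v, w) d(law of W)`; the same argument with `U = 1` shows that `F(V)` is a version of
`𝔼[f(V, W) ∣ V]`. As `F(V)` is `σ(V)`-measurable, it can be pulled out of `𝔼[U · F(V) ∣ V]`. -/

section

variable {Ω : Type*} {m mΩ : MeasurableSpace Ω}

theorem ae_eq_of_forall_setLIntegral_eq_of_sigmaFinite_trim (hm : m ≤ mΩ) {μ : Measure Ω}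
    [SigmaFinite (μ.trim hm)] {f g : Ω → ℝ≥0∞} (hf : Measurable[m] f) (hg : Measurable[m] g)
    (hfg : ∀ s, MeasurableSet[m] s → ∫⁻ ω in s, f ω ∂μ = ∫⁻ ω in s, g ω ∂μ) :
    f =ᵐ[μ] g := by
  refine ae_eq_of_ae_eq_trim <|
    ae_eq_of_forall_setLIntegral_eq_of_sigmaFinite hf hg fun s hs _ => ?_
  rw [setLIntegral_trim hm hf hs, setLIntegral_trim hm hg hs, hfg s hs]

theorem setLIntegral_mul_eq_of_forall_setLIntegral_eq (hm : m ≤ mΩ) (μ : Measure Ω)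
    {g u h : Ω → ℝ≥0∞} (hg : Measurable[m] g) (hu : Measurable u) (hh : Measurable[m] h)
    (hgu : ∀ s, MeasurableSet[m] s → ∫⁻ ω in s, g ω ∂μ = ∫⁻ ω in s, u ω ∂μ)
    {s : Set Ω} (hs : MeasurableSet[m] s) :
    ∫⁻ ω in s, g ω * h ω ∂μ = ∫⁻ ω in s, u ω * h ω ∂μ := by
  have htrim : (μ.withDensity g).trim hm = (μ.withDensity u).trim hm := by
    refine @Measure.ext _ m _ _ fun t ht => ?_
    rw [trim_measurableSet_eq hm ht, trim_measurableSet_eq hm ht, withDensity_apply _ (hm t ht),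
      withDensity_apply _ (hm t ht), hgu t ht]
  have hh' : Measurable h := hh.mono hm le_rfl
  change ∫⁻ ω in s, (g * h) ω ∂μ = ∫⁻ ω in s, (u * h) ω ∂μ
  rw [← setLIntegral_withDensity_eq_setLIntegral_mul μ (hg.mono hm le_rfl) hh' (hm s hs),
    ← setLIntegral_withDensity_eq_setLIntegral_mul μ hu hh' (hm s hs),
    ← setLIntegral_trim hm hh hs, htrim, setLIntegral_trim hm hh hs]

end

section

variable {Ω α β : Type*} {mΩ : MeasurableSpace Ω} {mα : MeasurableSpace α}
  {mβ : MeasurableSpace β} {P : Measure Ω} [IsFiniteMeasure P]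

theorem setLIntegral_preimage_comp_eq_of_indepFun {X : Ω → α} {W : Ω → β}
    (hX : Measurable X) (hW : Measurable W) (hXW : ProbabilityTheory.IndepFun X W P)
    {φ : α × β → ℝ≥0∞} (hφ : Measurable φ) {B : Set α} (hB : MeasurableSet B) :
    ∫⁻ ω in X ⁻¹' B, φ (X ω, W ω) ∂P = ∫⁻ ω in X ⁻¹' B, ∫⁻ w, φ (X ω, w) ∂(P.map W) ∂P := by
  rw [ProbabilityTheory.indepFun_iff_map_prod_eq_prod_map_map hX.aemeasurable
    hW.aemeasurable] at hXW
  have hpre : (fun ω => (X ω, W ω)) ⁻¹' (B ×ˢ Set.univ) = X ⁻¹' B := by ext; simp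
  calc ∫⁻ ω in X ⁻¹' B, φ (X ω, W ω) ∂P
      = ∫⁻ p in B ×ˢ Set.univ, φ p ∂(P.map fun ω => (X ω, W ω)) := by
        rw [setLIntegral_map (hB.prod .univ) hφ (hX.prodMk hW), hpre]
    _ = ∫⁻ x in B, ∫⁻ w, φ (x, w) ∂(P.map W) ∂(P.map X) := by
        rw [hXW, ← Measure.prod_restrict, Measure.restrict_univ,
          lintegral_prod _ hφ.aemeasurable]
    _ = ∫⁻ ω in X ⁻¹' B, ∫⁻ w, φ (X ω, w) ∂(P.map W) ∂P :=
        setLIntegral_map hB hφ.lintegral_prod_right' hX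

theorem setLIntegral_preimage_mul_comp_eq_of_indepFun {U : Ω → ℝ≥0∞} {V : Ω → α} {W : Ω → β}
    (hU : Measurable U) (hV : Measurable V) (hW : Measurable W)
    (hUVW : ProbabilityTheory.IndepFun (fun ω => (U ω, V ω)) W P)
    {f : α × β → ℝ≥0∞} (hf : Measurable f) {A : Set α} (hA : MeasurableSet A) :
    ∫⁻ ω in V ⁻¹' A, U ω * f (V ω, W ω) ∂P
      = ∫⁻ ω in V ⁻¹' A, U ω * ∫⁻ w, f (V ω, w) ∂(P.map W) ∂P := by
  have hpre : (fun ω => (U ω, V ω)) ⁻¹' (Set.univ ×ˢ A) = V ⁻¹' A := by ext; simp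
  have key := setLIntegral_preimage_comp_eq_of_indepFun (hU.prodMk hV) hW hUVW
    (φ := fun p => p.1.1 * f (p.1.2, p.2)) (by fun_prop) (MeasurableSet.univ.prod hA)
  rw [hpre] at key
  refine key.trans (setLIntegral_congr_fun (hV hA) fun ω _ => ?_)
  exact lintegral_const_mul _ (hf.comp measurable_prodMk_left)

end

/-- **Lemma (conditional independence factorization).**
Let `(Ω, ℱ, ℙ)` be a probability space, `(𝒱, ℱ_𝒱)`, `(𝒲, ℱ_𝒲)` measurable spaces, and
`U : Ω → [0,∞]`, `f : 𝒱 × 𝒲 → [0,∞]`, `V : Ω → 𝒱`, `W : Ω → 𝒲` measurable. If the pair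
`(U, V)` is independent of `W`, then `𝔼[U·f(V,W) ∣ V] = 𝔼[U ∣ V]·𝔼[f(V,W) ∣ V]`
ℙ-almost surely. Since the functions are `[0,∞]`-valued, a conditional expectation of
`H : Ω → [0,∞]` given `V` is formalized as a `σ(V)`-measurable `G : Ω → [0,∞]` with
`∫⁻_s G dℙ = ∫⁻_s H dℙ` for every `s ∈ σ(V)`; the conclusion states that any such
versions `g₁, g₂, g₃` for `U·f(V,W)`, `U` and `f(V,W)` satisfy `g₁ = g₂·g₃` ℙ-a.s. -/
theorem stmt_19
    {Ω 𝒱 𝒲 : Type*} {mΩ : MeasurableSpace Ω} {m𝒱 : MeasurableSpace 𝒱}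
    {m𝒲 : MeasurableSpace 𝒲}
    (P : Measure Ω) [IsProbabilityMeasure P]
    (U : Ω → ℝ≥0∞) (f : 𝒱 × 𝒲 → ℝ≥0∞) (V : Ω → 𝒱) (W : Ω → 𝒲)
    (hU : Measurable U) (hf : Measurable f) (hV : Measurable V) (hW : Measurable W)
    (hindep : ProbabilityTheory.IndepFun (fun ω => (U ω, V ω)) W P)
    (g₁ g₂ g₃ : Ω → ℝ≥0∞)
    (hg₁ : Measurable[MeasurableSpace.comap V m𝒱] g₁)
    (hg₂ : Measurable[MeasurableSpace.comap V m𝒱] g₂)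
    (hg₃ : Measurable[MeasurableSpace.comap V m𝒱] g₃)
    (hg₁int : ∀ s : Set Ω, MeasurableSet[MeasurableSpace.comap V m𝒱] s →
      ∫⁻ ω in s, g₁ ω ∂P = ∫⁻ ω in s, U ω * f (V ω, W ω) ∂P)
    (hg₂int : ∀ s : Set Ω, MeasurableSet[MeasurableSpace.comap V m𝒱] s →
      ∫⁻ ω in s, g₂ ω ∂P = ∫⁻ ω in s, U ω ∂P)
    (hg₃int : ∀ s : Set Ω, MeasurableSet[MeasurableSpace.comap V m𝒱] s →
      ∫⁻ ω in s, g₃ ω ∂P = ∫⁻ ω in s, f (V ω, W ω) ∂P) :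
    g₁ =ᵐ[P] fun ω => g₂ ω * g₃ ω := by
  have hm : MeasurableSpace.comap V m𝒱 ≤ mΩ := hV.comap_le
  set F : 𝒱 → ℝ≥0∞ := fun v => ∫⁻ w, f (v, w) ∂(P.map W)
  have hFV : Measurable[MeasurableSpace.comap V m𝒱] fun ω => F (V ω) :=
    hf.lintegral_prod_right'.comp (comap_measurable V)
  have hg₃F : g₃ =ᵐ[P] fun ω => F (V ω) := by
    refine ae_eq_of_forall_setLIntegral_eq_of_sigmaFinite_trim hm hg₃ hFV ?_
    rintro _ ⟨A, hA, rfl⟩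
    rw [hg₃int _ ⟨A, hA, rfl⟩]
    exact setLIntegral_preimage_comp_eq_of_indepFun hV hW
      (hindep.comp measurable_snd measurable_id) hf hA
  refine ae_eq_of_forall_setLIntegral_eq_of_sigmaFinite_trim hm hg₁ (hg₂.mul hg₃) ?_
  rintro _ ⟨A, hA, rfl⟩
  calc ∫⁻ ω in V ⁻¹' A, g₁ ω ∂P
      = ∫⁻ ω in V ⁻¹' A, U ω * F (V ω) ∂P := by
        rw [hg₁int _ ⟨A, hA, rfl⟩,
          setLIntegral_preimage_mul_comp_eq_of_indepFun hU hV hW hindep hf hA]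
    _ = ∫⁻ ω in V ⁻¹' A, g₂ ω * F (V ω) ∂P :=
        (setLIntegral_mul_eq_of_forall_setLIntegral_eq hm P hg₂ hU hFV hg₂int ⟨A, hA, rfl⟩).symm
    _ = ∫⁻ ω in V ⁻¹' A, g₂ ω * g₃ ω ∂P := by
        refine lintegral_congr_ae ?_
        filter_upwards [ae_restrict_of_ae hg₃F] with ω hω
        rw [hω]
end
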